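/- arXiv:1901.07911 — 3 statements merged into one kernel-verified Lean document; each statement's English description precedes it below -/
import Mathlib

section
/- Let B be a real Banach space and Φ = {φ_λ : λ ∈ Λ} ⊆ B' a family of bounded linear functionals satisfying the complement property (for every S ⊆ Λ, the annihilator of span Φ_S or of span Φ_{Λ∖S} is {0}). Then the map f ↦ (|⟨f, φ_λ⟩|)_{λ∈Λ} is injective up to a global sign: if |⟨f, φ_λ⟩| = |⟨h, φ_λ⟩| for all λ, then f = h or f = -h. -/
/-- In a real Banach space, the complement property implies that the phaseless
measurement map is injective up to a global sign. -/
theorem complement_property_sufficient_real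
    {B : Type*} [NormedAddCommGroup B] [NormedSpace ℝ B] [CompleteSpace B]
    {Λ : Type*} (Φ : Λ → (B →L[ℝ] ℝ))
    (hCP : ∀ S : Set Λ,
      (∀ f : B, (∀ l ∈ S, Φ l f = 0) → f = 0) ∨
      (∀ f : B, (∀ l ∉ S, Φ l f = 0) → f = 0)) :
    ∀ f h : B, (∀ l : Λ, |Φ l f| = |Φ l h|) → f = h ∨ f = -h := by
  intro f h habs
  set S : Set Λ := {l | Φ l f = Φ l h} with hS
  rcases hCP S with H | H
  · left
    have := H (f - h) (by
      intro l hl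
      simp only [map_sub]
      simpa using sub_eq_zero.mpr hl)
    exact sub_eq_zero.mp this
  · right
    have := H (f + h) (by
      intro l hl
      have h1 := habs l
      have : Φ l f = -Φ l h := by
        rcases abs_eq_abs.mp h1 with h2 | h2
        · exact absurd h2 hl
        · exact h2
      simp [map_add, this])
    have := add_eq_zero_iff_eq_neg.mp this
    exact this
end

section
/- If N < 2d - 1, then for any family Φ of N vectors in K^d (K ∈ {ℝ, ℂ}), the phaseless measurement map x ↦ (|⟨x, φ_k⟩|)_{k=1}^N is not injective modulo unimodular scalars. -/
/-!
Phase retrieval forces the complement property: if `u` is orthogonal to the measurement vectors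
indexed by `s` and `v` to those indexed by `sᶜ`, then `u + v` and `u - v` have the same phaseless
measurements, and `u - v = c • (u + v)` with `‖c‖ = 1` forces `u = 0` or `v = 0`. With fewer than
`2d - 1` vectors, the indices split into two sets of at most `d - 1` vectors each, neither of which
spans `𝕜^d`.
-/

open scoped InnerProductSpace

open Module Submodule

section

variable {𝕜 E ι : Type*} [RCLike 𝕜] [NormedAddCommGroup E] [InnerProductSpace 𝕜 E]

variable (𝕜) in
def IsPhaseRetrievable (Φ : ι → E) : Prop :=
  ∀ x y : E, (∀ k, ‖⟪Φ k, x⟫_𝕜‖ = ‖⟪Φ k, y⟫_𝕜‖) → ∃ c : 𝕜, ‖c‖ = 1 ∧ y = c • x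

theorem span_image_ne_top_of_card_lt [FiniteDimensional 𝕜 E] (Φ : ι → E) (s : Finset ι)
    (hs : s.card < finrank 𝕜 E) : span 𝕜 (Φ '' s) ≠ ⊤ := by
  classical
  intro htop
  have hle : finrank 𝕜 (span 𝕜 (Φ '' s)) ≤ s.card := by
    rw [← Finset.coe_image]
    exact (finrank_span_finset_le_card _).trans Finset.card_image_le
  rw [htop, finrank_top] at hle
  omega

theorem exists_ne_zero_mem_orthogonal_of_ne_top [FiniteDimensional 𝕜 E] {K : Submodule 𝕜 E}
    (hK : K ≠ ⊤) : ∃ u ∈ Kᗮ, u ≠ 0 :=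
  exists_mem_ne_zero_of_ne_bot (mt orthogonal_eq_bot_iff.mp hK)

namespace IsPhaseRetrievable

variable {Φ : ι → E}

theorem eq_zero_of_forall_inner_eq_zero (hΦ : IsPhaseRetrievable 𝕜 Φ) {w : E}
    (hw : ∀ k, ⟪Φ k, w⟫_𝕜 = 0) : w = 0 := by
  obtain ⟨c, hc, hzero⟩ := hΦ w 0 (by simp [hw])
  have hc0 : c ≠ 0 := by rintro rfl; simp at hc
  exact (smul_eq_zero.mp hzero.symm).resolve_left hc0

theorem eq_zero_or_eq_zero_of_orthogonal (hΦ : IsPhaseRetrievable 𝕜 Φ) (s : Set ι) {u v : E}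
    (hu : ∀ k ∈ s, ⟪Φ k, u⟫_𝕜 = 0) (hv : ∀ k ∉ s, ⟪Φ k, v⟫_𝕜 = 0) : u = 0 ∨ v = 0 := by
  obtain ⟨c, -, hc⟩ := hΦ (u + v) (u - v) fun k => by
    by_cases hk : k ∈ s
    · simp [inner_add_right, inner_sub_right, hu k hk]
    · simp [inner_add_right, inner_sub_right, hv k hk]
  have key : (1 - c) • u = (1 + c) • v := by
    rw [sub_smul, add_smul, one_smul, one_smul]
    linear_combination (norm := module) hc
  by_cases hc1 : 1 + c = 0
  · left
    rw [show c = -1 by linear_combination hc1] at key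
    norm_num at key
    exact key
  · right
    have hvu : v = ((1 + c)⁻¹ * (1 - c)) • u := by
      rw [mul_smul, key, inv_smul_smul₀ hc1]
    refine hΦ.eq_zero_of_forall_inner_eq_zero fun k => ?_
    by_cases hk : k ∈ s
    · rw [hvu, inner_smul_right, hu k hk, mul_zero]
    · exact hv k hk

theorem span_eq_top_or_span_compl_eq_top [FiniteDimensional 𝕜 E] (hΦ : IsPhaseRetrievable 𝕜 Φ)
    (s : Set ι) : span 𝕜 (Φ '' s) = ⊤ ∨ span 𝕜 (Φ '' sᶜ) = ⊤ := by
  by_contra! ⟨hs, hsc⟩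
  obtain ⟨u, hu, hu0⟩ := exists_ne_zero_mem_orthogonal_of_ne_top hs
  obtain ⟨v, hv, hv0⟩ := exists_ne_zero_mem_orthogonal_of_ne_top hsc
  have hu' : ∀ k ∈ s, ⟪Φ k, u⟫_𝕜 = 0 := fun k hk =>
    (mem_orthogonal _ u).mp hu _ (subset_span ⟨k, hk, rfl⟩)
  have hv' : ∀ k ∉ s, ⟪Φ k, v⟫_𝕜 = 0 := fun k hk =>
    (mem_orthogonal _ v).mp hv _ (subset_span ⟨k, hk, rfl⟩)
  rcases hΦ.eq_zero_or_eq_zero_of_orthogonal s hu' hv' with h | h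
  · exact hu0 h
  · exact hv0 h

end IsPhaseRetrievable

end

theorem no_phase_retrieval_of_few_measurements_general
    {𝕜 : Type*} [RCLike 𝕜] {d N : ℕ} (hN : N < 2 * d - 1)
    (Φ : Fin N → EuclideanSpace 𝕜 (Fin d)) :
    ¬ (∀ x y : EuclideanSpace 𝕜 (Fin d),
        (∀ k : Fin N, ‖⟪Φ k, x⟫_𝕜‖ = ‖⟪Φ k, y⟫_𝕜‖) →
        ∃ c : 𝕜, ‖c‖ = 1 ∧ y = c • x) := by
  intro hΦ
  obtain ⟨s, -, hs⟩ :=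
    (Finset.univ : Finset (Fin N)).exists_subset_card_eq (n := min (d - 1) N) (by simp)
  have hcard : s.card < finrank 𝕜 (EuclideanSpace 𝕜 (Fin d)) := by
    rw [finrank_euclideanSpace_fin]; omega
  have hcard_compl : sᶜ.card < finrank 𝕜 (EuclideanSpace 𝕜 (Fin d)) := by
    rw [finrank_euclideanSpace_fin, Finset.card_compl, Fintype.card_fin]; omega
  rcases IsPhaseRetrievable.span_eq_top_or_span_compl_eq_top (𝕜 := 𝕜) hΦ s with h | h
  · exact span_image_ne_top_of_card_lt Φ s hcard h
  · exact span_image_ne_top_of_card_lt Φ sᶜ hcard_compl (by rwa [Finset.coe_compl])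

/-- If `N < 2d - 1` then no family of `N` vectors in `𝕜^d` yields an injective
(modulo unimodular scalars) phaseless measurement map. -/
theorem no_phase_retrieval_of_few_measurements
    {𝕜 : Type*} [RCLike 𝕜] {d N : ℕ} (hd : 1 ≤ d) (hN : N < 2 * d - 1)
    (Φ : Fin N → EuclideanSpace 𝕜 (Fin d)) :
    ¬ (∀ x y : EuclideanSpace 𝕜 (Fin d),
        (∀ k : Fin N, ‖⟪Φ k, x⟫_𝕜‖ = ‖⟪Φ k, y⟫_𝕜‖) →
        ∃ c : 𝕜, ‖c‖ = 1 ∧ y = c • x) :=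
  no_phase_retrieval_of_few_measurements_general hN Φ
end

section
/- Let x, y ∈ ℂ^{J_n} with Z-transforms X, Y. If there exist a factorization Y = Y₁·Y₂ into polynomials, a constant γ with |γ| = 1, and τ ∈ ℤ^d such that X(z) = γ z^τ Y₁(z) · conj(Y₂(conj(z)⁻¹)) for all z ≠ 0, then |x̂(ω)| = |ŷ(ω)| for all ω ∈ ℝ^d. -/
/-!
Evaluating the Z-transform on the unit torus `|zᵢ| = 1` gives the DTFT. There `conj(z)⁻¹ = z`,
so the reflected factor `conj(Y₂(conj(z)⁻¹))` is just `conj(Y₂(z))`, which has the same modulus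
as `Y₂(z)`; the monomial `z^τ` and the constant `γ` are unimodular. Hence `|X(z)| = |Y₁(z)Y₂(z)|`.
-/

open scoped Real ComplexConjugate BigOperators

/-- The discrete-time Fourier transform of `x ∈ ℂ^{J_n}`. -/
noncomputable def dtft {d : ℕ} {n : Fin d → ℕ}
    (x : (∀ i, Fin (n i)) → ℂ) (ω : Fin d → ℝ) : ℂ :=
  ∑ j : ∀ i, Fin (n i),
    x j * Complex.exp ((-2 * π * Complex.I) * (∑ i, ((j i : ℕ) : ℝ) * ω i / (n i)))

/-- The Z-transform of `x ∈ ℂ^{J_n}`: `X(z) = ∑_{j ∈ J_n} x_j z^j`. -/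
noncomputable def ztransform {d : ℕ} {n : Fin d → ℕ}
    (x : (∀ i, Fin (n i)) → ℂ) (z : Fin d → ℂ) : ℂ :=
  ∑ j : ∀ i, Fin (n i), x j * ∏ i, (z i) ^ (j i : ℕ)

section UnitTorus

variable {ι 𝕜 : Type*} [Fintype ι] [RCLike 𝕜]

lemma inv_conj_eq_self_of_norm_eq_one {z : 𝕜} (hz : ‖z‖ = 1) : (conj z)⁻¹ = z := by
  rw [RCLike.inv_eq_conj (by rwa [RCLike.norm_conj]), RCLike.conj_conj]

lemma norm_prod_zpow_of_norm_eq_one {z : ι → 𝕜} (hz : ∀ i, ‖z i‖ = 1) (τ : ι → ℤ) :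
    ‖∏ i, z i ^ τ i‖ = 1 := by
  simp [norm_prod, norm_zpow, hz]

lemma norm_mul_prod_zpow_mul_conj_reflect {z : ι → 𝕜} (hz : ∀ i, ‖z i‖ = 1) {γ : 𝕜}
    (hγ : ‖γ‖ = 1) (τ : ι → ℤ) (a : 𝕜) (f : (ι → 𝕜) → 𝕜) :
    ‖γ * (∏ i, z i ^ τ i) * a * conj (f fun i => (conj (z i))⁻¹)‖ = ‖a * f z‖ := by
  have hreflect : (fun i => (conj (z i))⁻¹) = z :=
    funext fun i => inv_conj_eq_self_of_norm_eq_one (hz i)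
  rw [hreflect, norm_mul, norm_mul, norm_mul, hγ, norm_prod_zpow_of_norm_eq_one hz,
    RCLike.norm_conj, norm_mul, one_mul, one_mul]

end UnitTorus

noncomputable def dtftPoint {d : ℕ} (n : Fin d → ℕ) (ω : Fin d → ℝ) : Fin d → ℂ :=
  fun i => Complex.exp (↑(-2 * π * ω i / n i) * Complex.I)

lemma norm_dtftPoint {d : ℕ} (n : Fin d → ℕ) (ω : Fin d → ℝ) (i : Fin d) :
    ‖dtftPoint n ω i‖ = 1 :=
  Complex.norm_exp_ofReal_mul_I _

lemma dtft_eq_ztransform_dtftPoint {d : ℕ} {n : Fin d → ℕ}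
    (x : (∀ i, Fin (n i)) → ℂ) (ω : Fin d → ℝ) :
    dtft x ω = ztransform x (dtftPoint n ω) := by
  refine Finset.sum_congr rfl fun j _ => congrArg (x j * ·) ?_
  simp only [dtftPoint, ← Complex.exp_nat_mul, ← Complex.exp_sum]
  congr 1
  push_cast
  rw [Finset.mul_sum]
  refine Finset.sum_congr rfl fun i _ => ?_
  ring

/-- If `X(z) = γ z^τ Y₁(z) conj(Y₂(conj(z)⁻¹))` for a factorization `Y = Y₁ Y₂`,
a unimodular constant `γ` and `τ ∈ ℤ^d`, then `x` and `y` have the same Fourier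
magnitudes. -/
theorem dtft_eq_of_ztransform_factorization {d : ℕ} {n : Fin d → ℕ}
    (x y : (∀ i, Fin (n i)) → ℂ)
    (Y₁ Y₂ : (Fin d → ℂ) → ℂ) (γ : ℂ) (hγ : ‖γ‖ = 1) (τ : Fin d → ℤ)
    (hY : ∀ z : Fin d → ℂ, ztransform y z = Y₁ z * Y₂ z)
    (hX : ∀ z : Fin d → ℂ, (∀ i, z i ≠ 0) →
      ztransform x z =
        γ * (∏ i, (z i) ^ (τ i)) * Y₁ z * conj (Y₂ (fun i => (conj (z i))⁻¹))) :
    ∀ ω : Fin d → ℝ, ‖dtft x ω‖ = ‖dtft y ω‖ := by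
  intro ω
  rw [dtft_eq_ztransform_dtftPoint, dtft_eq_ztransform_dtftPoint,
    hX (dtftPoint n ω) fun _ => Complex.exp_ne_zero _, hY]
  exact norm_mul_prod_zpow_mul_conj_reflect (norm_dtftPoint n ω) hγ τ _ _
end
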